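/- Proposition 3 of the paper (syndrome measurements), stated as a cycle-space membership: let n, m ∈ ℕ and let s : Fin n → V_m be stabilizer labels with ⟨s_i, s_j⟩ = 0 for all i, j; write S(x) := Σ_{i : x_i = 1} s_i for x ∈ Z2^n. Let g : V_{m+n} → V_{m+n} be a map such that g(Q⊞x) = (Q + S(x))⊞x for every x ∈ Z2^n and every Q ∈ V_m with ⟨s_i, Q⟩ = 0 for all i. Let P ∈ V_m satisfy ⟨s_i, P⟩ = 0 for all i, and let a ∈ Z2^n with a ≠ 0. Then in the free ℝ-module on Pauli weight patterns one has Σ_{x,y,k ∈ Z2^n} Σ_{Q ∈ V_m} (-1)^{⟨S(k) + P, Q⟩} · ((-1)^{a·x} + (-1)^{a·y}) · ([pt(Q⊞y)] − [pt(g(Q⊞x))]) = 0; i.e., the 1-chain Σ_{x,y,k,Q} (-1)^{⟨S(k)P, Q⟩} [(-1)^{a·x} + (-1)^{a·y}] e^Q_{x,y} of the pattern transfer graph has zero boundary. -/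

import Mathlib

open Finset

/-- `m`-qubit Pauli operators modulo phase, as pairs of X- and Z-exponents per qubit. -/
abbrev V (m : ℕ) := Fin m → ZMod 2 × ZMod 2

/-- Symplectic inner product recording (non-)commutation of Pauli operators. -/
def sympl {m : ℕ} (P Q : V m) : ZMod 2 :=
  ∑ i, ((P i).1 * (Q i).2 + (P i).2 * (Q i).1)

/-- Dot product on `Z2^n`. -/
def dot {n : ℕ} (x y : Fin n → ZMod 2) : ZMod 2 := ∑ i, x i * y i

/-- The real sign `(-1)^z` associated with `z : ZMod 2`. -/
def sgn (z : ZMod 2) : ℝ := (-1 : ℝ) ^ z.val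

/-- Pauli weight pattern: `1` on qubits where the Pauli label is non-identity. -/
def pt {N : ℕ} (v : V N) : Fin N → ZMod 2 :=
  fun i => if v i = (0, 0) then 0 else 1

/-- `Q⊞x`: the `(m+n)`-qubit Pauli label of `Q ⊗ Z^x`. -/
def emb {m n : ℕ} (Q : V m) (x : Fin n → ZMod 2) : V (m + n) :=
  Fin.append Q (fun i => ((0 : ZMod 2), x i))

/-- `S(x) = Σ_{i : x_i = 1} s_i`: the label of the product of the stabilizers
selected by `x`. -/
def Sfun {n m : ℕ} (s : Fin n → V m) (x : Fin n → ZMod 2) : V m :=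
  ∑ i ∈ Finset.univ.filter (fun i => x i = 1), s i

/-! With `F(Q) := Σ_k (-1)^⟨S(k)+P,Q⟩`, summing over `k` first turns the chain's boundary into
`Σ_{x,y} w(x,y) (U_y - U'_x)` with `U_x = Σ_Q F(Q) [pt(Q⊞x)]`, `U'_x = Σ_Q F(Q) [pt(g(Q⊞x))]`
and `w(x,y) = (-1)^{a·x} + (-1)^{a·y}`. As `w` is symmetric, it suffices that `U' = U`.
By orthogonality of characters, `F(Q) = 0` unless `Q` commutes with every `s_i`, and for such `Q`
the hypothesis on `g` gives `g(Q⊞x) = (Q+S(x))⊞x`. Since `S(x)` commutes with every `S(k)+P`,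
`F` is invariant under `Q ↦ Q + S(x)`, so this substitution turns `U'_x` into `U_x`. -/

lemma zmod_two_eq_zero_or_one (u : ZMod 2) : u = 0 ∨ u = 1 := by
  revert u; decide

lemma sgn_one : sgn 1 = -1 := by
  simp [sgn, ZMod.val_one]

lemma sgn_add (u v : ZMod 2) : sgn (u + v) = sgn u * sgn v := by
  rcases zmod_two_eq_zero_or_one u with rfl | rfl <;>
    rcases zmod_two_eq_zero_or_one v with rfl | rfl <;>
    simp [sgn_one, show (1 + 1 : ZMod 2) = 0 from rfl, show sgn 0 = 1 from rfl]

def sgnChar : AddChar (ZMod 2) ℝ where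
  toFun := sgn
  map_zero_eq_one' := rfl
  map_add_eq_mul' := sgn_add

lemma sum_sgn_eq_zero {G : Type*} [AddCommGroup G] [Fintype G] (φ : G →+ ZMod 2)
    {g₀ : G} (hg₀ : φ g₀ ≠ 0) : ∑ g, sgn (φ g) = 0 := by
  refine AddChar.sum_eq_zero_of_ne_one (ψ := sgnChar.compAddMonoidHom φ)
    (AddChar.ne_one_iff.2 ⟨g₀, ?_⟩)
  change sgn (φ g₀) ≠ 1
  rw [(zmod_two_eq_zero_or_one _).resolve_left hg₀, sgn_one]
  norm_num

section Symplectic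

variable {m : ℕ}

lemma sympl_comm (P Q : V m) : sympl P Q = sympl Q P := by
  simp only [sympl]
  exact Finset.sum_congr rfl fun i _ => by ring

lemma sympl_add_left (P Q R : V m) : sympl (P + Q) R = sympl P R + sympl Q R := by
  simp only [sympl, Pi.add_apply, Prod.fst_add, Prod.snd_add, ← Finset.sum_add_distrib]
  exact Finset.sum_congr rfl fun i _ => by ring

lemma sympl_add_right (P Q R : V m) : sympl P (Q + R) = sympl P Q + sympl P R := by
  rw [sympl_comm, sympl_add_left, sympl_comm Q, sympl_comm R]

lemma sympl_zero_right (P : V m) : sympl P 0 = 0 := by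
  simp [sympl]

end Symplectic

section Stabilizers

variable {n m : ℕ} (s : Fin n → V m)

lemma Sfun_eq_sum_smul (x : Fin n → ZMod 2) : Sfun s x = ∑ i, x i • s i := by
  rw [Sfun, Finset.sum_filter]
  refine Finset.sum_congr rfl fun i _ => ?_
  rcases zmod_two_eq_zero_or_one (x i) with h | h <;> simp [h]

lemma Sfun_add (x y : Fin n → ZMod 2) : Sfun s (x + y) = Sfun s x + Sfun s y := by
  simp only [Sfun_eq_sum_smul, Pi.add_apply, add_smul, Finset.sum_add_distrib]

lemma Sfun_single (i : Fin n) : Sfun s (Pi.single i 1) = s i := by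
  simp [Sfun_eq_sum_smul, Pi.single_apply]

lemma sympl_Sfun_eq_zero {v : V m} (hv : ∀ i, sympl v (s i) = 0) (x : Fin n → ZMod 2) :
    sympl v (Sfun s x) = 0 :=
  Finset.sum_induction _ (fun w => sympl v w = 0)
    (fun _ _ h₁ h₂ => by rw [sympl_add_right, h₁, h₂, add_zero]) (sympl_zero_right v)
    fun i _ => hv i

def syndromeSignSum (P Q : V m) : ℝ := ∑ k, sgn (sympl (Sfun s k + P) Q)

lemma syndromeSignSum_eq_zero {P Q : V m} {i : Fin n} (hi : sympl (s i) Q ≠ 0) :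
    syndromeSignSum s P Q = 0 := by
  let φ : (Fin n → ZMod 2) →+ ZMod 2 :=
    AddMonoidHom.mk' (fun k => sympl (Sfun s k) Q) fun k l => by
      rw [Sfun_add, sympl_add_left]
  have hφ : φ (Pi.single i 1) ≠ 0 := by simpa [φ, Sfun_single] using hi
  simp only [syndromeSignSum, sympl_add_left, sgn_add, ← Finset.sum_mul]
  rw [show ∑ k, sgn (sympl (Sfun s k) Q) = 0 from sum_sgn_eq_zero φ hφ, zero_mul]

lemma syndromeSignSum_add_Sfun (hs : ∀ i j, sympl (s i) (s j) = 0) {P : V m}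
    (hP : ∀ i, sympl (s i) P = 0) (Q : V m) (x : Fin n → ZMod 2) :
    syndromeSignSum s P (Q + Sfun s x) = syndromeSignSum s P Q := by
  refine Finset.sum_congr rfl fun k _ => ?_
  have hk : ∀ j, sympl (Sfun s k + P) (s j) = 0 := fun j => by
    rw [sympl_add_left, sympl_comm, sympl_Sfun_eq_zero s (hs j), sympl_comm, hP, add_zero]
  rw [sympl_add_right, sympl_Sfun_eq_zero s hk, add_zero]

lemma sum_syndromeSignSum_smul_comp {M : Type*} [AddCommGroup M] [Module ℝ M]
    (hs : ∀ i j, sympl (s i) (s j) = 0) (g : V (m + n) → V (m + n))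
    (hg : ∀ (x : Fin n → ZMod 2) (Q : V m), (∀ i, sympl (s i) Q = 0) →
      g (emb Q x) = emb (Q + Sfun s x) x)
    {P : V m} (hP : ∀ i, sympl (s i) P = 0) (x : Fin n → ZMod 2) (f : V (m + n) → M) :
    ∑ Q, syndromeSignSum s P Q • f (g (emb Q x)) =
      ∑ Q, syndromeSignSum s P Q • f (emb Q x) :=
  calc ∑ Q, syndromeSignSum s P Q • f (g (emb Q x))
      = ∑ Q, syndromeSignSum s P Q • f (emb (Q + Sfun s x) x) := by
        refine Finset.sum_congr rfl fun Q _ => ?_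
        by_cases hQ : ∀ i, sympl (s i) Q = 0
        · rw [hg x Q hQ]
        · obtain ⟨i, hi⟩ := not_forall.1 hQ
          rw [syndromeSignSum_eq_zero s hi, zero_smul, zero_smul]
    _ = ∑ Q, syndromeSignSum s P (Q + Sfun s x) • f (emb (Q + Sfun s x) x) := by
        simp only [syndromeSignSum_add_Sfun s hs hP]
    _ = ∑ Q, syndromeSignSum s P Q • f (emb Q x) :=
        Equiv.sum_comp (Equiv.addRight (Sfun s x)) fun Q => syndromeSignSum s P Q • f (emb Q x)

end Stabilizers

lemma sum_sum_smul_sub_eq_zero_of_symm {ι R M : Type*} [Fintype ι] [Ring R] [AddCommGroup M]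
    [Module R M] (w : ι → ι → R) (hw : ∀ x y, w x y = w y x) (U : ι → M) :
    ∑ x, ∑ y, w x y • (U y - U x) = 0 := by
  simp only [smul_sub, Finset.sum_sub_distrib, sub_eq_zero]
  rw [Finset.sum_comm]
  simp only [hw]

theorem stmt_8_general (n m : ℕ) (s : Fin n → V m)
    (hs : ∀ i j, sympl (s i) (s j) = 0)
    (g : V (m + n) → V (m + n))
    (hg : ∀ (x : Fin n → ZMod 2) (Q : V m), (∀ i, sympl (s i) Q = 0) →
      g (emb Q x) = emb (Q + Sfun s x) x)
    (P : V m) (hP : ∀ i, sympl (s i) P = 0)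
    (a : Fin n → ZMod 2) :
    ∑ x : Fin n → ZMod 2, ∑ y : Fin n → ZMod 2, ∑ k : Fin n → ZMod 2, ∑ Q : V m,
      (sgn (sympl (Sfun s k + P) Q) * (sgn (dot a x) + sgn (dot a y))) •
        (Finsupp.single (pt (emb Q y)) (1 : ℝ) -
          Finsupp.single (pt (g (emb Q x))) (1 : ℝ)) = 0 := by
  let w x y := sgn (dot a x) + sgn (dot a y)
  let U (x : Fin n → ZMod 2) :=
    ∑ Q, syndromeSignSum s P Q • Finsupp.single (pt (emb Q x)) (1 : ℝ)
  calc _ = ∑ x, ∑ y, w x y • (U y - U x) := by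
        refine Finset.sum_congr rfl fun x _ => Finset.sum_congr rfl fun y _ => ?_
        rw [show U x = _ from
          (sum_syndromeSignSum_smul_comp s hs g hg hP x fun v => Finsupp.single (pt v) 1).symm,
          Finset.sum_comm]
        simp only [U, w, syndromeSignSum, Finset.sum_smul, ← Finset.sum_sub_distrib, ← smul_sub,
          Finset.smul_sum, smul_smul, mul_comm (sgn (dot a x) + sgn (dot a y))]
    _ = 0 := sum_sum_smul_sub_eq_zero_of_symm w (fun x y => add_comm _ _) U

/-- Proposition 3 of the paper (syndrome measurements), as a cycle-space membership:
for `P` commuting with all stabilizers and `a ≠ 0`, the 1-chain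
`Σ_{x,y,k,Q} (-1)^{⟨S(k)P,Q⟩} [(-1)^{a·x} + (-1)^{a·y}] e^Q_{x,y}` has zero boundary. -/
theorem stmt_8 (n m : ℕ) (s : Fin n → V m)
    (hs : ∀ i j, sympl (s i) (s j) = 0)
    (g : V (m + n) → V (m + n))
    (hg : ∀ (x : Fin n → ZMod 2) (Q : V m), (∀ i, sympl (s i) Q = 0) →
      g (emb Q x) = emb (Q + Sfun s x) x)
    (P : V m) (hP : ∀ i, sympl (s i) P = 0)
    (a : Fin n → ZMod 2) (ha : a ≠ 0) :
    ∑ x : Fin n → ZMod 2, ∑ y : Fin n → ZMod 2, ∑ k : Fin n → ZMod 2, ∑ Q : V m,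
      (sgn (sympl (Sfun s k + P) Q) * (sgn (dot a x) + sgn (dot a y))) •
        (Finsupp.single (pt (emb Q y)) (1 : ℝ) -
          Finsupp.single (pt (g (emb Q x))) (1 : ℝ)) = 0 :=
  stmt_8_general n m s hs g hg P hP a
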